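/- Let f(X) = AXAᵀ + Q with Q ≻ 0 and suppose (1 − λ_a) ρ(A)² < η for η ∈ (0,1), λ_a ∈ (0,1). For the Markov chain τ_k on ℕ where P(τ_{k+1} = τ_k + 1) = 1 − λ_a and P(τ_{k+1} = 0) = λ_a, and any symmetric M ⪰ 0, the discounted sum Σ_{k=0}^∞ η^k E[tr(M f^{τ_k}(P̄))] is finite for any fixed initial state τ_0 and P̄ ⪰ 0. -/

import Mathlib

/-!
By Gelfand's formula `‖Aʲ‖ ≤ C sʲ` for every `s > ρ(A)`, and unrolling `f` gives
`fʲ(P̄) = Aʲ P̄ (Aᵀ)ʲ + ∑_{i<j} Aⁱ Q (Aᵀ)ⁱ`. Hence `|tr(M fʲ(P̄))|` grows at most like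
`(j+1) uʲ` for any `u > max 1 ρ(A)²`, and the series `∑ⱼ (1-λ)ʲ tr(M fʲ(P̄))` converges as soon
as `(1-λ) ρ(A)² < 1`. The expected cost at time `k` is a partial sum of this series plus the
tail term `(1-λ)ᵏ tr(M f^{τ₀+k}(P̄))`, so it converges as `k → ∞`, and a convergent sequence
discounted by `ηᵏ`, `η < 1`, is summable.
-/

open Matrix Filter Topology Asymptotics

theorem iterate_mul_mul_add_apply {R : Type*} [Semiring R] (a b q x : R) (j : ℕ) :
    (fun y => a * y * b + q)^[j] x =
      a ^ j * x * b ^ j + ∑ i ∈ Finset.range j, a ^ i * q * b ^ i := by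
  induction j with
  | zero => simp
  | succ j ih =>
    rw [Function.iterate_succ_apply', ih, Finset.sum_range_succ']
    simp only [mul_add, add_mul, Finset.mul_sum, Finset.sum_mul, pow_succ' a, pow_succ b,
      mul_assoc, pow_zero, one_mul, mul_one, add_assoc]

theorem norm_iterate_mul_mul_add_le {R : Type*} [NormedRing R] (a b q x : R) {C u : ℝ}
    (hu : 1 ≤ u) (hab : ∀ i, ‖a ^ i‖ * ‖b ^ i‖ ≤ C * u ^ i) (j : ℕ) :
    ‖(fun y => a * y * b + q)^[j] x‖ ≤ C * (‖x‖ + j * ‖q‖) * u ^ j := by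
  have hC : 0 ≤ C := by simpa using (mul_nonneg (norm_nonneg _) (norm_nonneg _)).trans (hab 0)
  have hterm : ∀ i ≤ j, ∀ y : R, ‖a ^ i * y * b ^ i‖ ≤ C * u ^ j * ‖y‖ := fun i hi y =>
    calc ‖a ^ i * y * b ^ i‖ ≤ ‖a ^ i‖ * ‖y‖ * ‖b ^ i‖ := norm_mul₃_le
      _ = ‖a ^ i‖ * ‖b ^ i‖ * ‖y‖ := by ring
      _ ≤ C * u ^ i * ‖y‖ := mul_le_mul_of_nonneg_right (hab i) (norm_nonneg y)
      _ ≤ C * u ^ j * ‖y‖ := by gcongr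
  rw [iterate_mul_mul_add_apply]
  calc _ ≤ ‖a ^ j * x * b ^ j‖ + ∑ i ∈ Finset.range j, ‖a ^ i * q * b ^ i‖ :=
        (norm_add_le _ _).trans (add_le_add_right (norm_sum_le _ _) _)
    _ ≤ C * u ^ j * ‖x‖ + ∑ i ∈ Finset.range j, C * u ^ j * ‖q‖ :=
        add_le_add (hterm j le_rfl x) (Finset.sum_le_sum fun i hi =>
          hterm i (Finset.mem_range.1 hi).le q)
    _ = C * (‖x‖ + j * ‖q‖) * u ^ j := by
        simp only [Finset.sum_const, Finset.card_range, nsmul_eq_mul]; ring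

theorem exists_norm_pow_le_of_toReal_spectralRadius_lt {A : Type*} [NormedRing A]
    [NormedAlgebra ℂ A] [CompleteSpace A] (a : A) {s : ℝ} (hs : (spectralRadius ℂ a).toReal < s) :
    ∃ C, ∀ k, ‖a ^ k‖ ≤ C * s ^ k := by
  have hs0 : 0 < s := ENNReal.toReal_nonneg.trans_lt hs
  have hfin : spectralRadius ℂ a ≠ ⊤ :=
    ne_top_of_le_ne_top (by finiteness) (spectrum.spectralRadius_le_pow_nnnorm_pow_one_div ℂ a 0)
  have hlt : spectralRadius ℂ a < ENNReal.ofReal s := (ENNReal.lt_ofReal_iff_toReal_lt hfin).2 hs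
  have hev : ∀ᶠ k in atTop, ‖a ^ k‖ ≤ ‖s ^ k‖ := by
    filter_upwards [(spectrum.pow_norm_pow_one_div_tendsto_nhds_spectralRadius a)
      |>.eventually_lt_const hlt, eventually_gt_atTop 0] with k hk hk0
    rw [ENNReal.ofReal_lt_ofReal_iff hs0, one_div,
      Real.rpow_inv_lt_iff_of_pos (norm_nonneg _) hs0.le (by positivity), Real.rpow_natCast] at hk
    exact hk.le.trans (le_abs_self _)
  obtain ⟨C, hC⟩ := (isBigO_nat_atTop_iff fun k h => absurd h (pow_ne_zero k hs0.ne')).1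
    (IsBigO.of_bound 1 (by simpa using hev))
  exact ⟨C, fun k => by simpa [abs_of_pos hs0] using hC k⟩

section Frobenius

attribute [local instance] Matrix.frobeniusSeminormedAddCommGroup Matrix.frobeniusNormedRing
  Matrix.frobeniusNormedAlgebra

theorem Matrix.norm_entry_le_frobenius_norm {m n α : Type*} [Fintype m] [Fintype n]
    [SeminormedAddCommGroup α] (A : Matrix m n α) (i : m) (j : n) : ‖A i j‖ ≤ ‖A‖ :=
  (PiLp.norm_apply_le (WithLp.toLp 2 (A i)) j).trans
    (PiLp.norm_apply_le (WithLp.toLp 2 fun i => WithLp.toLp 2 (A i)) i)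

theorem Matrix.norm_trace_le_card_mul_frobenius_norm {n α : Type*} [Fintype n]
    [SeminormedAddCommGroup α] (A : Matrix n n α) : ‖A.trace‖ ≤ Fintype.card n * ‖A‖ :=
  calc ‖A.trace‖ ≤ ∑ i, ‖A i i‖ := norm_sum_le _ _
    _ ≤ ∑ _i : n, ‖A‖ := Finset.sum_le_sum fun i _ => A.norm_entry_le_frobenius_norm i i
    _ = Fintype.card n * ‖A‖ := by simp

variable {ι : Type*} [Fintype ι] [DecidableEq ι]

theorem Matrix.exists_norm_pow_le_of_spectralRadius_map_lt (A : Matrix ι ι ℝ) {s : ℝ}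
    (hs : (spectralRadius ℂ (A.map (Complex.ofReal ·))).toReal < s) :
    ∃ C, ∀ k, ‖A ^ k‖ ≤ C * s ^ k := by
  obtain ⟨C, hC⟩ := exists_norm_pow_le_of_toReal_spectralRadius_lt _ hs
  refine ⟨C, fun k => ?_⟩
  have hmap : (A.map (Complex.ofReal ·)) ^ k = (A ^ k).map (Complex.ofReal ·) :=
    (map_pow Complex.ofRealHom.mapMatrix A k).symm
  simpa [hmap, frobenius_norm_map_eq _ _ Complex.norm_real] using hC k

theorem exists_abs_trace_mul_iterate_le (A Q P M : Matrix ι ι ℝ) {u : ℝ} (hu1 : 1 ≤ u)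
    (hρu : (spectralRadius ℂ (A.map (Complex.ofReal ·))).toReal ^ 2 < u) :
    ∃ K L : ℝ, ∀ j : ℕ,
      |(M * (fun X => A * X * Aᵀ + Q)^[j] P).trace| ≤ (K + L * j) * u ^ j := by
  obtain ⟨C, hC⟩ := A.exists_norm_pow_le_of_spectralRadius_map_lt
    ((Real.lt_sqrt ENNReal.toReal_nonneg).2 hρu)
  have hAAt : ∀ i, ‖A ^ i‖ * ‖Aᵀ ^ i‖ ≤ C ^ 2 * u ^ i := fun i => by
    rw [← transpose_pow, frobenius_norm_transpose, ← sq]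
    calc ‖A ^ i‖ ^ 2 ≤ (C * √u ^ i) ^ 2 := pow_le_pow_left₀ (norm_nonneg _) (hC i) 2
      _ = C ^ 2 * u ^ i := by
        rw [mul_pow, ← pow_mul, mul_comm i, pow_mul, Real.sq_sqrt (by linarith)]
  set K := Fintype.card ι * ‖M‖ * C ^ 2
  refine ⟨K * ‖P‖, K * ‖Q‖, fun j => ?_⟩
  calc |(M * (fun X => A * X * Aᵀ + Q)^[j] P).trace|
      ≤ Fintype.card ι * (‖M‖ * ‖(fun X => A * X * Aᵀ + Q)^[j] P‖) :=
        (norm_trace_le_card_mul_frobenius_norm _).trans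
          (mul_le_mul_of_nonneg_left (norm_mul_le M _) (Nat.cast_nonneg _))
    _ ≤ Fintype.card ι * (‖M‖ * (C ^ 2 * (‖P‖ + j * ‖Q‖) * u ^ j)) := by
        gcongr; exact norm_iterate_mul_mul_add_le _ _ _ _ hu1 hAAt j
    _ = (K * ‖P‖ + K * ‖Q‖ * j) * u ^ j := by ring

end Frobenius

theorem summable_pow_mul_trace_iterate {ι : Type*} [Fintype ι] [DecidableEq ι]
    (A Q P M : Matrix ι ι ℝ) {p : ℝ} (hp0 : 0 < p) (hp1 : p < 1)
    (hρ : p * (spectralRadius ℂ (A.map (Complex.ofReal ·))).toReal ^ 2 < 1) :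
    Summable fun j => p ^ j * (M * (fun X => A * X * Aᵀ + Q)^[j] P).trace := by
  obtain ⟨u, hu, hpu⟩ :=
    exists_between <| max_lt ((one_lt_div hp0).2 hp1) ((lt_div_iff₀' hp0).2 hρ)
  have hu1 : 1 ≤ u := (le_max_left _ _).trans hu.le
  obtain ⟨K, L, hKL⟩ :=
    exists_abs_trace_mul_iterate_le A Q P M hu1 ((le_max_right _ _).trans_lt hu)
  have hpu_norm : ‖p * u‖ < 1 := by
    rw [Real.norm_of_nonneg (by positivity)]
    exact (lt_div_iff₀' hp0).1 hpu
  refine Summable.of_norm_bounded (g := fun j : ℕ => K * (p * u) ^ j + L * (j ^ 1 * (p * u) ^ j))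
    (((summable_geometric_of_norm_lt_one hpu_norm).mul_left _).add
      ((summable_pow_mul_geometric_of_norm_lt_one 1 hpu_norm).mul_left _)) fun j => ?_
  calc ‖p ^ j * (M * (fun X => A * X * Aᵀ + Q)^[j] P).trace‖
      = p ^ j * |(M * (fun X => A * X * Aᵀ + Q)^[j] P).trace| := by
        rw [norm_mul, norm_pow, Real.norm_of_nonneg hp0.le, Real.norm_eq_abs]
    _ ≤ p ^ j * ((K + L * j) * u ^ j) := by gcongr; exact hKL j
    _ = K * (p * u) ^ j + L * (j ^ 1 * (p * u) ^ j) := by rw [mul_pow]; ring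

theorem tendsto_sum_range_add_pow_mul_shift {g : ℕ → ℝ} {p : ℝ} (hp : p ≠ 0)
    (hg : Summable fun j => p ^ j * g j) (c : ℝ) (τ₀ : ℕ) :
    Tendsto (fun k => ∑ j ∈ Finset.range k, c * p ^ j * g j + p ^ k * g (τ₀ + k)) atTop
      (𝓝 (c * ∑' j, p ^ j * g j)) := by
  have hsum : Tendsto (fun k => ∑ j ∈ Finset.range k, c * p ^ j * g j) atTop
      (𝓝 (c * ∑' j, p ^ j * g j)) := by
    simpa only [Finset.mul_sum, mul_assoc] using hg.hasSum.tendsto_sum_nat.const_mul c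
  have htail : Tendsto (fun k => p ^ k * g (τ₀ + k)) atTop (𝓝 0) := by
    have hshift : Tendsto (fun k => p ^ (k + τ₀) * g (k + τ₀)) atTop (𝓝 0) :=
      (tendsto_add_atTop_iff_nat τ₀).2 hg.tendsto_atTop_zero
    refine (mul_zero (p ^ τ₀)⁻¹ ▸ hshift.const_mul (p ^ τ₀)⁻¹).congr fun k => ?_
    rw [pow_add, add_comm k]
    field_simp
  simpa using hsum.add htail

theorem stmt17_general {n : ℕ} (A Q Pbar M : Matrix (Fin n) (Fin n) ℝ)
    (η lamA : ℝ) (hη : η ∈ Set.Ioo (0 : ℝ) 1) (hlam : lamA ∈ Set.Ioo (0 : ℝ) 1)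
    (hcond : (1 - lamA) * ((spectralRadius ℂ (A.map (Complex.ofReal ·))).toReal) ^ 2 < η)
    (τ0 : ℕ) :
    Summable (fun k : ℕ => η ^ k *
      ((∑ j ∈ Finset.range k, lamA * (1 - lamA) ^ j
          * (M * (fun X => A * X * Aᵀ + Q)^[j] Pbar).trace)
        + (1 - lamA) ^ k * (M * (fun X => A * X * Aᵀ + Q)^[τ0 + k] Pbar).trace)) := by
  obtain ⟨hη0, hη1⟩ := hη
  obtain ⟨hlam0, hlam1⟩ := hlam
  have hcost := summable_pow_mul_trace_iterate A Q Pbar M (sub_pos.2 hlam1) (by linarith)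
    (hcond.trans hη1)
  have hdiscount : Summable fun k => ‖η ^ k‖ := by
    simpa [abs_of_pos hη0] using summable_geometric_of_lt_one hη0.le hη1
  have hexpected := tendsto_sum_range_add_pow_mul_shift (sub_pos.2 hlam1).ne' hcost lamA τ0
  rw [← Nat.cofinite_eq_atTop] at hexpected
  exact hdiscount.mul_tendsto_const hexpected

/-- Boundedness of the expected discounted cost under constant attack: if
`(1−λ_a) ρ(A)² < η` then `Σ_k η^k E[tr(M f^{τ_k}(P̄))]` is finite, where the
holding time chain `τ_k` resets to `0` w.p. `λ_a` and increments w.p. `1−λ_a`,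
so that `E[tr(M f^{τ_k}(P̄))] = Σ_{j<k} λ_a(1−λ_a)^j tr(M f^[j](P̄))
+ (1−λ_a)^k tr(M f^[τ₀+k](P̄))`. -/
theorem stmt17 {n : ℕ} (A Q Pbar M : Matrix (Fin n) (Fin n) ℝ)
    (hQ : Q.PosDef) (hPbar : Pbar.PosSemidef) (hM : M.PosSemidef)
    (η lamA : ℝ) (hη : η ∈ Set.Ioo (0 : ℝ) 1) (hlam : lamA ∈ Set.Ioo (0 : ℝ) 1)
    (hcond : (1 - lamA) * ((spectralRadius ℂ (A.map (Complex.ofReal ·))).toReal) ^ 2 < η)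
    (τ0 : ℕ) :
    Summable (fun k : ℕ => η ^ k *
      ((∑ j ∈ Finset.range k, lamA * (1 - lamA) ^ j
          * (M * (fun X => A * X * Aᵀ + Q)^[j] Pbar).trace)
        + (1 - lamA) ^ k * (M * (fun X => A * X * Aᵀ + Q)^[τ0 + k] Pbar).trace)) :=
  stmt17_general A Q Pbar M η lamA hη hlam hcond τ0
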